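/- Let n > m ≥ 2 be integers, let A_1, …, A_{m−1} be a skew Clifford system on ℝ^{n+1}, set c = (m−1)/(n−1) and F(x,y) = ⟨x,y⟩² + Σ_{q=1}^{m−1} ⟨A_q x, y⟩². Suppose ‖x‖ = ‖y‖ = 1 and F(x,y) = c, and write B_p = ⟨A_p x, y⟩. Then for all real numbers r, s, t: ‖r x + t(⟨x,y⟩ y + Σ_p B_p A_pᵀ y)‖² = r² + 2rtc + t²c and ‖s y + t(⟨x,y⟩ x + Σ_p B_p A_p x)‖² = s² + 2stc + t²c. -/

import Mathlib

open Matrix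
open scoped RealInnerProductSpace BigOperators

noncomputable section

/-- A skew Clifford system `A_1, …, A_{m-1}` on `ℝ^N`: skew-symmetric matrices with
`A_p A_q + A_q A_p = -2 δ_{pq} Id`. -/
def IsSkewCliffordSystem {N m : ℕ} (A : Fin (m - 1) → Matrix (Fin N) (Fin N) ℝ) : Prop :=
  (∀ p q, A p * A q + A q * A p =
      if p = q then (-2 : ℝ) • (1 : Matrix (Fin N) (Fin N) ℝ) else 0) ∧
  (∀ p, (A p)ᵀ = -A p)

/-- The action of a matrix on Euclidean space. -/
def act {N : ℕ} (A : Matrix (Fin N) (Fin N) ℝ) (x : EuclideanSpace ℝ (Fin N)) :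
    EuclideanSpace ℝ (Fin N) :=
  Matrix.toEuclideanLin A x

/-- The splitting form of the FKM isoparametric polynomial:
`F(x,y) = ⟨x,y⟩² + Σ_q ⟨A_q x, y⟩²`. -/
def FKM {N m : ℕ} (A : Fin (m - 1) → Matrix (Fin N) (Fin N) ℝ)
    (x y : EuclideanSpace ℝ (Fin N)) : ℝ :=
  ⟪x, y⟫ ^ 2 + ∑ q, ⟪act (A q) x, y⟫ ^ 2

/-!
For a unit vector `v`, the Clifford relations make `v, A_1 v, …, A_{m-1} v` orthonormal. The
vector `⟨v,w⟩ v + Σ_p ⟨A_p v, w⟩ A_p v` is the orthogonal projection of `w` onto their span, so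
its squared norm and its inner product with `w` both equal `F(v,w)`. This gives the second
identity with `(v, w) = (x, y)`; the first is the second one for the transposed system `A_pᵀ`
with `(v, w) = (y, x)`, which has the same splitting form.
-/

theorem norm_smul_add_smul_sq_of_inner_eq {E : Type*} [NormedAddCommGroup E]
    [InnerProductSpace ℝ E] {w u : E} {c : ℝ} (hw : ‖w‖ = 1) (hwu : ⟪w, u⟫ = c)
    (hu : ‖u‖ ^ 2 = c) (s t : ℝ) :
    ‖s • w + t • u‖ ^ 2 = s ^ 2 + 2 * s * t * c + t ^ 2 * c := by
  rw [norm_add_sq_real, norm_smul, norm_smul, real_inner_smul_left, real_inner_smul_right, hwu,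
    mul_pow, mul_pow, hw, hu, Real.norm_eq_abs, Real.norm_eq_abs, sq_abs, sq_abs]
  ring

theorem Orthonormal.norm_smul_add_smul_sum_inner_smul_sq {E ι : Type*} [NormedAddCommGroup E]
    [InnerProductSpace ℝ E] [Fintype ι] {e : ι → E} (he : Orthonormal ℝ e) {w : E}
    (hw : ‖w‖ = 1) (s t : ℝ) :
    ‖s • w + t • ∑ i, ⟪e i, w⟫ • e i‖ ^ 2 =
      s ^ 2 + 2 * s * t * ∑ i, ⟪e i, w⟫ ^ 2 + t ^ 2 * ∑ i, ⟪e i, w⟫ ^ 2 := by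
  refine norm_smul_add_smul_sq_of_inner_eq hw ?_ ?_ s t
  · simp only [inner_sum, real_inner_smul_right, real_inner_comm w, sq]
  · rw [← real_inner_self_eq_norm_sq, he.inner_sum]
    simp only [conj_trivial, sq]

section Clifford

variable {N m : ℕ}

theorem inner_act_left (M : Matrix (Fin N) (Fin N) ℝ) (v w : EuclideanSpace ℝ (Fin N)) :
    ⟪act M v, w⟫ = ⟪v, act Mᵀ w⟫ := by
  rw [act, act, ← conjTranspose_eq_transpose_of_trivial, toEuclideanLin_conjTranspose_eq_adjoint,
    LinearMap.adjoint_inner_right]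

theorem act_mul (M P : Matrix (Fin N) (Fin N) ℝ) (v : EuclideanSpace ℝ (Fin N)) :
    act (M * P) v = act M (act P v) := by
  simp [act]

theorem act_neg (M : Matrix (Fin N) (Fin N) ℝ) (v : EuclideanSpace ℝ (Fin N)) :
    act (-M) v = -act M v := by
  simp [act]

theorem act_add (M P : Matrix (Fin N) (Fin N) ℝ) (v : EuclideanSpace ℝ (Fin N)) :
    act (M + P) v = act M v + act P v := by
  simp [act]

theorem FKM_transpose (A : Fin (m - 1) → Matrix (Fin N) (Fin N) ℝ)
    (x y : EuclideanSpace ℝ (Fin N)) : FKM (fun p => (A p)ᵀ) y x = FKM A x y := by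
  simp only [FKM, real_inner_comm x y, inner_act_left (A _)ᵀ, transpose_transpose,
    real_inner_comm (act (A _) x) y]

def cliffordFrame (A : Fin (m - 1) → Matrix (Fin N) (Fin N) ℝ) (v : EuclideanSpace ℝ (Fin N)) :
    Option (Fin (m - 1)) → EuclideanSpace ℝ (Fin N) :=
  fun i => i.elim v fun p => act (A p) v

theorem sum_inner_smul_cliffordFrame (A : Fin (m - 1) → Matrix (Fin N) (Fin N) ℝ)
    (v w : EuclideanSpace ℝ (Fin N)) :
    ∑ i, ⟪cliffordFrame A v i, w⟫ • cliffordFrame A v i =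
      ⟪v, w⟫ • v + ∑ p, ⟪act (A p) v, w⟫ • act (A p) v :=
  Fintype.sum_option _

theorem sum_inner_sq_cliffordFrame (A : Fin (m - 1) → Matrix (Fin N) (Fin N) ℝ)
    (v w : EuclideanSpace ℝ (Fin N)) : ∑ i, ⟪cliffordFrame A v i, w⟫ ^ 2 = FKM A v w :=
  Fintype.sum_option _

namespace IsSkewCliffordSystem

variable {A : Fin (m - 1) → Matrix (Fin N) (Fin N) ℝ}

theorem transpose (hA : IsSkewCliffordSystem A) : IsSkewCliffordSystem fun p => (A p)ᵀ := by
  refine ⟨fun p q => ?_, fun p => by simp only [hA.2 p, transpose_neg]⟩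
  simp only [hA.2, neg_mul_neg]
  exact hA.1 p q

theorem inner_act_self (hA : IsSkewCliffordSystem A) (p : Fin (m - 1))
    (v : EuclideanSpace ℝ (Fin N)) : ⟪v, act (A p) v⟫ = 0 := by
  have h := inner_act_left (A p) v v
  rw [hA.2 p, act_neg, inner_neg_right, real_inner_comm] at h
  linarith

theorem inner_act_act (hA : IsSkewCliffordSystem A) (p q : Fin (m - 1))
    (v : EuclideanSpace ℝ (Fin N)) :
    ⟪act (A p) v, act (A q) v⟫ = if p = q then ‖v‖ ^ 2 else 0 := by
  have key : ∀ p q, ⟪act (A p) v, act (A q) v⟫ = -⟪v, act (A p * A q) v⟫ := fun p q => by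
    rw [inner_act_left, hA.2 p, act_neg, inner_neg_right, act_mul]
  have hsum : ⟪v, act (A p * A q) v⟫ + ⟪v, act (A q * A p) v⟫ =
      if p = q then -2 * ‖v‖ ^ 2 else 0 := by
    rw [← inner_add_right, ← act_add, hA.1 p q]
    split_ifs
    · simp [act, real_inner_smul_right]
    · simp [act]
  have hqp := key q p
  rw [real_inner_comm] at hqp
  split_ifs at hsum ⊢ <;> linarith [key p q]

theorem orthonormal_cliffordFrame (hA : IsSkewCliffordSystem A) {v : EuclideanSpace ℝ (Fin N)}
    (hv : ‖v‖ = 1) : Orthonormal ℝ (cliffordFrame A v) := by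
  rw [orthonormal_iff_ite]
  rintro (_ | p) (_ | q)
  · simp [cliffordFrame, hv]
  · simp [cliffordFrame, hA.inner_act_self]
  · simp [cliffordFrame, real_inner_comm v, hA.inner_act_self]
  · simp [cliffordFrame, hA.inner_act_act, hv]

theorem norm_smul_add_smul_FKM_sq (hA : IsSkewCliffordSystem A) {v w : EuclideanSpace ℝ (Fin N)}
    (hv : ‖v‖ = 1) (hw : ‖w‖ = 1) (s t : ℝ) :
    ‖s • w + t • (⟪v, w⟫ • v + ∑ p, ⟪act (A p) v, w⟫ • act (A p) v)‖ ^ 2 =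
      s ^ 2 + 2 * s * t * FKM A v w + t ^ 2 * FKM A v w := by
  rw [← sum_inner_smul_cliffordFrame, ← sum_inner_sq_cliffordFrame]
  exact (hA.orthonormal_cliffordFrame hv).norm_smul_add_smul_sum_inner_smul_sq hw s t

end IsSkewCliffordSystem

end Clifford

theorem stmt9_general (n m : ℕ)
    (A : Fin (m - 1) → Matrix (Fin (n + 1)) (Fin (n + 1)) ℝ)
    (hA : IsSkewCliffordSystem A)
    (c : ℝ)
    (x y : EuclideanSpace ℝ (Fin (n + 1))) (hx : ‖x‖ = 1) (hy : ‖y‖ = 1)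
    (hF : FKM A x y = c) (r s t : ℝ) :
    ‖r • x + t • (⟪x, y⟫ • y + ∑ p, ⟪act (A p) x, y⟫ • act (A p)ᵀ y)‖ ^ 2 =
        r ^ 2 + 2 * r * t * c + t ^ 2 * c ∧
    ‖s • y + t • (⟪x, y⟫ • x + ∑ p, ⟪act (A p) x, y⟫ • act (A p) x)‖ ^ 2 =
        s ^ 2 + 2 * s * t * c + t ^ 2 * c := by
  refine ⟨?_, hF ▸ hA.norm_smul_add_smul_FKM_sq hx hy s t⟩
  have h := hA.transpose.norm_smul_add_smul_FKM_sq hy hx r t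
  have hB : ∀ p, ⟪act (A p)ᵀ y, x⟫ = ⟪act (A p) x, y⟫ := fun p => by
    rw [inner_act_left, transpose_transpose, real_inner_comm]
  simpa only [FKM_transpose, hF, hB, real_inner_comm y x] using h

/-- with `c = (m−1)/(n−1)`, `‖x‖ = ‖y‖ = 1`, `F(x,y) = c` and
`B_p = ⟨A_p x, y⟩`, for all reals `r, s, t`:
`‖r x + t(⟨x,y⟩ y + Σ_p B_p A_pᵀ y)‖² = r² + 2rtc + t²c` and
`‖s y + t(⟨x,y⟩ x + Σ_p B_p A_p x)‖² = s² + 2stc + t²c`. -/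
theorem stmt9 (n m : ℕ) (hm : 2 ≤ m) (hmn : m < n)
    (A : Fin (m - 1) → Matrix (Fin (n + 1)) (Fin (n + 1)) ℝ)
    (hA : IsSkewCliffordSystem A)
    (c : ℝ) (hc : c = ((m : ℝ) - 1) / ((n : ℝ) - 1))
    (x y : EuclideanSpace ℝ (Fin (n + 1))) (hx : ‖x‖ = 1) (hy : ‖y‖ = 1)
    (hF : FKM A x y = c) (r s t : ℝ) :
    ‖r • x + t • (⟪x, y⟫ • y + ∑ p, ⟪act (A p) x, y⟫ • act (A p)ᵀ y)‖ ^ 2 =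
        r ^ 2 + 2 * r * t * c + t ^ 2 * c ∧
    ‖s • y + t • (⟪x, y⟫ • x + ∑ p, ⟪act (A p) x, y⟫ • act (A p) x)‖ ^ 2 =
        s ^ 2 + 2 * s * t * c + t ^ 2 * c :=
  stmt9_general n m A hA c x y hx hy hF r s t
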